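/- For any fixed τ > 0 and any Borel measurable encoder f : ℝⁿ → S^{m−1}, as the number of negative samples M → ∞, the normalized contrastive loss converges: lim_{M→∞} (L_contr(f;τ,M) − log M) = −(1/τ) E_{(x,y)∼p_pos}[f(x)·f(y)] + E_{x∼p_data}[log E_{x⁻∼p_data}[e^{f(x⁻)·f(x)/τ}]]. -/

import Mathlib

open MeasureTheory Real Filter Metric
open scoped RealInnerProductSpace ENNReal Topology BigOperators

noncomputable section

/-- `ℝ^n` as a Euclidean space. -/
abbrev Euc (n : ℕ) : Type := EuclideanSpace ℝ (Fin n)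

/-- The unit sphere in `ℝ^m`; the sphere `S^d` of the informal statement is `Sph (d+1)`. -/
abbrev Sph (m : ℕ) := Metric.sphere (0 : Euc m) 1

/-- The uniform (normalized surface-area) probability measure on the unit sphere of `ℝ^m`. -/
noncomputable def unifSphere (m : ℕ) : Measure (Sph m) :=
  ((volume : Measure (Euc m)).toSphere Set.univ)⁻¹ • (volume : Measure (Euc m)).toSphere

/-- The contrastive loss `L_contr(f; τ, M)` with `M` i.i.d. negative samples. -/
noncomputable def contrLoss {n m : ℕ} (pdata : Measure (Euc n)) (ppos : Measure (Euc n × Euc n))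
    (f : Euc n → Sph m) (τ : ℝ) (M : ℕ) : ℝ :=
  ∫ xy, ∫ xneg : Fin M → Euc n,
      -Real.log
        (Real.exp (⟪(f xy.1 : Euc m), (f xy.2 : Euc m)⟫ / τ) /
          (Real.exp (⟪(f xy.1 : Euc m), (f xy.2 : Euc m)⟫ / τ) +
            ∑ i : Fin M, Real.exp (⟪(f (xneg i) : Euc m), (f xy.2 : Euc m)⟫ / τ)))
    ∂(Measure.pi fun _ : Fin M => pdata) ∂ppos

/-!
With `s(x, y) = f(x)·f(y)/τ`, bounded by `B = 1/|τ|`, the integrand of the loss minus `log M`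
is `log ((e^{s(x,y)} + ∑ᵢ e^{s(x⁻ᵢ,y)}) / M) - s(x, y)`. For fixed `(x, y)`, the empirical mean
of the `e^{s(x⁻ᵢ,y)}` deviates from its expectation by at most `√(Var / M)` in `L¹` (variances of
independent samples add), and `log` is `e^B`-Lipschitz on `[e^{-B}, ∞)`, so the expectation over
the negatives converges to `log E_{x⁻}[e^{s(x⁻,y)}]`. These logarithms all lie in
`[-B, B + log 2]`, so dominated convergence passes the limit through the integral over `p_pos`;
its second marginal `p_data` gives the stated form.
-/

open ProbabilityTheory

lemma abs_log_sub_log_le_abs_sub_div {a u v : ℝ} (ha : 0 < a) (hu : a ≤ u) (hv : a ≤ v) :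
    |log u - log v| ≤ |u - v| / a := by
  wlog huv : u ≤ v generalizing u v
  · rw [abs_sub_comm, abs_sub_comm u]
    exact this hv hu (le_of_not_ge huv)
  have hu0 : 0 < u := ha.trans_le hu
  have hv0 : 0 < v := hu0.trans_le huv
  rw [abs_sub_comm, abs_of_nonneg (sub_nonneg.2 (log_le_log hu0 huv)), abs_sub_comm,
    abs_of_nonneg (sub_nonneg.2 huv)]
  calc log v - log u = log (v / u) := (log_div hv0.ne' hu0.ne').symm
    _ ≤ v / u - 1 := log_le_sub_one_of_pos (div_pos hv0 hu0)
    _ = (v - u) / u := by field_simp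
    _ ≤ (v - u) / a := div_le_div_of_nonneg_left (by linarith) ha hu

lemma abs_log_le_max_of_mem_Icc {a b u : ℝ} (ha : 0 < a) (hu : u ∈ Set.Icc a b) :
    |log u| ≤ max |log a| |log b| :=
  abs_le_max_abs_abs (log_le_log ha hu.1) (log_le_log (ha.trans_le hu.1) hu.2)

section SampleMean

variable {Ω α : Type*} [MeasurableSpace Ω] [MeasurableSpace α]

lemma integral_abs_sub_integral_le_sqrt_variance {μ : Measure Ω} [IsProbabilityMeasure μ]
    {X : Ω → ℝ} (hX : MemLp X 2 μ) : ∫ ω, |X ω - μ[X]| ∂μ ≤ √(Var[X; μ]) := by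
  have hY : MemLp (fun ω => |X ω - μ[X]|) 2 μ := (hX.sub (memLp_const _)).abs
  have hvar := variance_nonneg (fun ω => |X ω - μ[X]|) μ
  rw [variance_eq_sub hY] at hvar
  refine Real.le_sqrt_of_sq_le ?_
  rw [variance_eq_integral hX.aemeasurable]
  simpa [sq_abs] using hvar

lemma integral_abs_sum_div_sub_integral_le {μ : Measure α} [IsProbabilityMeasure μ] {g : α → ℝ}
    (hg : MemLp g 2 μ) {M : ℕ} (hM : M ≠ 0) :
    ∫ x : Fin M → α, |(∑ i, g (x i)) / M - ∫ y, g y ∂μ| ∂Measure.pi (fun _ => μ)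
      ≤ √(Var[g; μ] / M) := by
  set S : (Fin M → α) → ℝ := ∑ i, fun x => g (x i)
  have hS : MemLp S 2 (Measure.pi fun _ => μ) :=
    memLp_finsetSum' _ fun i _ => hg.comp_measurePreserving (measurePreserving_eval _ i)
  have hmean : ∫ x, (M : ℝ)⁻¹ * S x ∂(Measure.pi fun _ => μ) = ∫ y, g y ∂μ := by
    simp only [S, Finset.sum_apply]
    rw [integral_const_mul,
      integral_finsetSum _ fun i _ => integrable_comp_eval (hg.integrable one_le_two)]
    simp only [integral_comp_eval (μ := fun _ : Fin M => μ) hg.aestronglyMeasurable,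
      Finset.sum_const, Finset.card_univ, Fintype.card_fin, nsmul_eq_mul]
    field_simp
  have hvar : Var[fun x => (M : ℝ)⁻¹ * S x; Measure.pi fun _ => μ] = Var[g; μ] / M := by
    rw [variance_const_mul, variance_sum_pi fun _ => hg]
    simp only [Finset.sum_const, Finset.card_univ, Fintype.card_fin, nsmul_eq_mul]
    field_simp
  have h := integral_abs_sub_integral_le_sqrt_variance (hS.const_mul (M : ℝ)⁻¹)
  rw [hmean, hvar] at h
  simpa [div_eq_inv_mul, S] using h

end SampleMean

section ShiftedSampleMean

variable {α : Type*} {g : α → ℝ} {a b c : ℝ} {M : ℕ}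

lemma le_add_sum_div (hag : ∀ x, a ≤ g x) (hc : 0 ≤ c) (hM : M ≠ 0) (x : Fin M → α) :
    a ≤ (c + ∑ i, g (x i)) / M := by
  have hM0 : (0 : ℝ) < M := by positivity
  have : M * a ≤ ∑ i, g (x i) := by
    simpa using Finset.card_nsmul_le_sum Finset.univ (fun i => g (x i)) a fun i _ => hag _
  rw [le_div_iff₀ hM0]
  linarith

lemma add_sum_div_le_two_mul (hgb : ∀ x, g x ≤ b) (hc : c ∈ Set.Icc 0 b) (hM : M ≠ 0)
    (x : Fin M → α) : (c + ∑ i, g (x i)) / M ≤ 2 * b := by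
  have hM1 : (1 : ℝ) ≤ M := by simpa using Nat.one_le_iff_ne_zero.2 hM
  have : ∑ i, g (x i) ≤ M * b := by
    simpa using Finset.sum_le_card_nsmul Finset.univ (fun i => g (x i)) b fun i _ => hgb _
  rw [div_le_iff₀ (by positivity)]
  nlinarith [hc.1, hc.2]

lemma tendsto_integral_log_add_sum_div [MeasurableSpace α] {μ : Measure α}
    [IsProbabilityMeasure μ] (hg : Measurable g) (ha : 0 < a) (hag : ∀ x, a ≤ g x)
    (hgb : ∀ x, g x ≤ b) (hc : 0 ≤ c) :
    Tendsto (fun M : ℕ => ∫ x : Fin M → α, log ((c + ∑ i, g (x i)) / M) ∂Measure.pi fun _ => μ)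
      atTop (𝓝 (log (∫ y, g y ∂μ))) := by
  have hg2 : MemLp g 2 μ := memLp_of_bounded (a := a) (b := b)
    (ae_of_all _ fun x => ⟨hag x, hgb x⟩) hg.aestronglyMeasurable 2
  have hmean : a ≤ ∫ y, g y ∂μ := by
    simpa using integral_mono (integrable_const a) (hg2.integrable one_le_two) hag
  set ε : ℕ → ℝ := fun M => (c / M + √(Var[g; μ] / M)) / a
  have hε : Tendsto ε atTop (𝓝 0) := by
    simpa [ε] using ((tendsto_const_div_atTop_nhds_zero_nat c).add
      (tendsto_const_div_atTop_nhds_zero_nat (Var[g; μ])).sqrt).div_const a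
  refine squeeze_zero_norm' ?_ hε |> tendsto_sub_nhds_zero_iff.1
  filter_upwards [eventually_ne_atTop 0] with M hM
  set m := ∫ y, g y ∂μ
  have hpt (x : Fin M → α) : |log ((c + ∑ i, g (x i)) / M) - log m|
      ≤ (c / M + |(∑ i, g (x i)) / M - m|) / a := by
    refine (abs_log_sub_log_le_abs_sub_div ha (le_add_sum_div hag hc hM x) hmean).trans ?_
    gcongr
    rw [add_div, add_sub_assoc]
    exact (abs_add_le _ _).trans_eq (by rw [abs_of_nonneg (by positivity)])
  have hgi (i : Fin M) : Integrable (fun x : Fin M → α => g (x i)) (Measure.pi fun _ => μ) :=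
    integrable_comp_eval (hg2.integrable one_le_two)
  have hdev : Integrable (fun x : Fin M → α => |(∑ i, g (x i)) / M - m|)
      (Measure.pi fun _ => μ) :=
    (((integrable_finsetSum _ fun i _ => hgi i).div_const _).sub (integrable_const _)).abs
  have hdom : Integrable (fun x : Fin M → α => (c / M + |(∑ i, g (x i)) / M - m|) / a)
      (Measure.pi fun _ => μ) :=
    ((integrable_const _).add hdev).div_const _
  have hdiff : Integrable (fun x : Fin M → α => log ((c + ∑ i, g (x i)) / M) - log m)
      (Measure.pi fun _ => μ) :=
    hdom.mono' ((by fun_prop : Measurable fun x : Fin M → α => (c + ∑ i, g (x i)) / M).log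
      |>.sub_const _).aestronglyMeasurable (ae_of_all _ hpt)
  calc ‖(∫ x : Fin M → α, log ((c + ∑ i, g (x i)) / M) ∂Measure.pi fun _ => μ) - log m‖
      = ‖∫ x : Fin M → α, (log ((c + ∑ i, g (x i)) / M) - log m) ∂Measure.pi fun _ => μ‖ := by
        rw [integral_sub (by simpa [sub_eq_add_neg] using hdiff) (integrable_const _)]
        simp
    _ ≤ ∫ x : Fin M → α, (c / M + |(∑ i, g (x i)) / M - m|) / a ∂Measure.pi fun _ => μ :=
        norm_integral_le_of_norm_le hdom (ae_of_all _ hpt)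
    _ ≤ ε M := by
        rw [integral_div, integral_add (integrable_const _) hdev]
        simp only [integral_const, probReal_univ, one_smul, ε]
        gcongr
        exact integral_abs_sum_div_sub_integral_le hg2 hM

end ShiftedSampleMean

lemma neg_log_exp_div_exp_add {x T : ℝ} (hT : 0 ≤ T) {M : ℕ} (hM : M ≠ 0) :
    -log (exp x / (exp x + T)) = log ((exp x + T) / M) + (log M - x) := by
  have hxT : exp x + T ≠ 0 := by positivity
  rw [log_div (exp_pos x).ne' hxT, log_exp, log_div hxT (by positivity)]
  ring

section Softmax

variable {α : Type*} [MeasurableSpace α] {μ : Measure α} {ν : Measure (α × α)}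
  [IsProbabilityMeasure μ] [IsProbabilityMeasure ν] {s : α × α → ℝ} {B : ℝ}

theorem tendsto_integral_neg_log_softmax_sub_log (hs : Measurable s) (hB : ∀ p, |s p| ≤ B) :
    Tendsto (fun M : ℕ => (∫ xy, ∫ xneg : Fin M → α,
        -log (exp (s xy) / (exp (s xy) + ∑ i, exp (s (xneg i, xy.2))))
          ∂Measure.pi (fun _ => μ) ∂ν) - log M) atTop
      (𝓝 (-∫ xy, s xy ∂ν + ∫ xy, log (∫ x, exp (s (x, xy.2)) ∂μ) ∂ν)) := by
  set F : ∀ M : ℕ, α × α → (Fin M → α) → ℝ := fun M xy xneg =>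
    log ((exp (s xy) + ∑ i, exp (s (xneg i, xy.2))) / M)
  set G : ℕ → α × α → ℝ := fun M xy => ∫ xneg, F M xy xneg ∂Measure.pi fun _ => μ
  have hexp (p) : exp (s p) ∈ Set.Icc (exp (-B)) (exp B) :=
    ⟨exp_le_exp.2 (neg_le_of_abs_le (hB p)), exp_le_exp.2 (le_of_abs_le (hB p))⟩
  set C := max |log (exp (-B))| |log (2 * exp B)|
  have hFC (M : ℕ) (hM : M ≠ 0) (xy) (xneg : Fin M → α) : ‖F M xy xneg‖ ≤ C :=
    abs_log_le_max_of_mem_Icc (exp_pos _)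
      ⟨le_add_sum_div (fun x => (hexp (x, xy.2)).1) (exp_pos _).le hM xneg,
        add_sum_div_le_two_mul (fun x => (hexp (x, xy.2)).2) ⟨(exp_pos _).le, (hexp xy).2⟩ hM
          xneg⟩
  have hFm (M : ℕ) : Measurable (Function.uncurry (F M)) := by
    simp only [F]
    fun_prop
  have hFi (M : ℕ) (hM : M ≠ 0) (xy) : Integrable (F M xy) (Measure.pi fun _ => μ) :=
    .of_bound ((hFm M).comp measurable_prodMk_left).aestronglyMeasurable C
      (ae_of_all _ (hFC M hM xy))
  have hGC (M : ℕ) (hM : M ≠ 0) (xy) : ‖G M xy‖ ≤ C := by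
    simpa using norm_integral_le_of_norm_le_const (μ := Measure.pi fun _ : Fin M => μ)
      (ae_of_all _ (hFC M hM xy))
  have hGm (M : ℕ) : StronglyMeasurable (G M) :=
    (hFm M).stronglyMeasurable.integral_prod_right'
  have hsi : Integrable s ν := .of_bound hs.aestronglyMeasurable B (ae_of_all _ hB)
  have hsplit : ∀ᶠ M : ℕ in atTop, ∫ xy, G M xy ∂ν - ∫ xy, s xy ∂ν =
      (∫ xy, ∫ xneg : Fin M → α,
        -log (exp (s xy) / (exp (s xy) + ∑ i, exp (s (xneg i, xy.2))))
          ∂Measure.pi (fun _ => μ) ∂ν) - log M := by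
    filter_upwards [eventually_ne_atTop 0] with M hM
    have hinner (xy : α × α) : ∫ xneg : Fin M → α,
        -log (exp (s xy) / (exp (s xy) + ∑ i, exp (s (xneg i, xy.2)))) ∂Measure.pi (fun _ => μ)
          = G M xy + (log M - s xy) := by
      simp_rw [neg_log_exp_div_exp_add (Finset.sum_nonneg fun _ _ => (exp_pos _).le) hM]
      rw [integral_add (hFi M hM xy) (integrable_const _)]
      simp [G, F]
    simp_rw [hinner]
    have hGi : Integrable (G M) ν :=
      .of_bound (hGm M).aestronglyMeasurable C (ae_of_all _ (hGC M hM))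
    rw [integral_add hGi (by fun_prop), integral_sub (integrable_const _) hsi]
    simp only [integral_const, probReal_univ, one_smul]
    ring
  have hlim : Tendsto (fun M => ∫ xy, G M xy ∂ν) atTop
      (𝓝 (∫ xy, log (∫ x, exp (s (x, xy.2)) ∂μ) ∂ν)) :=
    tendsto_integral_filter_of_dominated_convergence (fun _ => C)
      (.of_forall fun M => (hGm M).aestronglyMeasurable)
      (by filter_upwards [eventually_ne_atTop 0] with M hM using ae_of_all _ (hGC M hM))
      (integrable_const C)
      (ae_of_all _ fun xy => tendsto_integral_log_add_sum_div (by fun_prop) (exp_pos (-B))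
        (fun x => (hexp (x, xy.2)).1) (fun x => (hexp (x, xy.2)).2) (exp_pos _).le)
  rw [neg_add_eq_sub]
  exact (hlim.sub_const _).congr' hsplit

end Softmax

theorem contrLoss_tendsto_align_add_uniform_general {n m : ℕ} (τ : ℝ)
    (pdata : Measure (Euc n)) (ppos : Measure (Euc n × Euc n))
    [IsProbabilityMeasure pdata] [IsProbabilityMeasure ppos]
    (hsnd : ppos.map Prod.snd = pdata)
    (f : Euc n → Sph m) (hf : Measurable f) :
    Tendsto (fun M : ℕ => contrLoss pdata ppos f τ M - Real.log M) atTop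
      (𝓝 (-(1 / τ) * (∫ xy, ⟪(f xy.1 : Euc m), (f xy.2 : Euc m)⟫ ∂ppos) +
          ∫ x, Real.log (∫ x', Real.exp (⟪(f x' : Euc m), (f x : Euc m)⟫ / τ) ∂pdata) ∂pdata)) := by
  set S : Euc n × Euc n → ℝ := fun p => ⟪(f p.1 : Euc m), (f p.2 : Euc m)⟫
  have hSm : Measurable S := by fun_prop
  have hSb (p) : |S p / τ| ≤ |τ|⁻¹ := by
    have : |S p| ≤ 1 := by
      simpa [norm_eq_of_mem_sphere] using abs_real_inner_le_norm (f p.1 : Euc m) (f p.2)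
    rw [abs_div, div_eq_mul_inv]
    exact mul_le_of_le_one_left (inv_nonneg.2 (abs_nonneg τ)) this
  have hmeas : AEStronglyMeasurable (fun y => log (∫ x, exp (S (x, y) / τ) ∂pdata))
      (ppos.map Prod.snd) :=
    ((hSm.comp measurable_swap).div_const τ).exp.stronglyMeasurable.integral_prod_right'
      |>.measurable.log.aestronglyMeasurable
  have hmarg := integral_map measurable_snd.aemeasurable hmeas
  rw [hsnd] at hmarg
  convert tendsto_integral_neg_log_softmax_sub_log (μ := pdata) (ν := ppos) (hSm.div_const τ) hSb
    using 2
  · rfl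
  · rw [hmarg, integral_div]
    ring

/-- Asymptotics of the contrastive loss: for fixed `τ > 0`,
`L_contr(f;τ,M) − log M` converges, as `M → ∞`, to
`−(1/τ) E_{(x,y)∼p_pos}[f(x)·f(y)] + E_{x∼p_data}[log E_{x⁻∼p_data}[exp(f(x⁻)·f(x)/τ)]]`. -/
theorem contrLoss_tendsto_align_add_uniform {n m : ℕ} (τ : ℝ) (hτ : 0 < τ)
    (pdata : Measure (Euc n)) (ppos : Measure (Euc n × Euc n))
    [IsProbabilityMeasure pdata] [IsProbabilityMeasure ppos]
    (hsym : ppos.map Prod.swap = ppos)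
    (hfst : ppos.map Prod.fst = pdata) (hsnd : ppos.map Prod.snd = pdata)
    (f : Euc n → Sph m) (hf : Measurable f) :
    Tendsto (fun M : ℕ => contrLoss pdata ppos f τ M - Real.log M) atTop
      (𝓝 (-(1 / τ) * (∫ xy, ⟪(f xy.1 : Euc m), (f xy.2 : Euc m)⟫ ∂ppos) +
          ∫ x, Real.log (∫ x', Real.exp (⟪(f x' : Euc m), (f x : Euc m)⟫ / τ) ∂pdata) ∂pdata)) :=
  contrLoss_tendsto_align_add_uniform_general τ pdata ppos hsnd f hf
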